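/- arXiv:2302.04357 — 4 statements merged into one kernel-verified Lean document; each statement's English description precedes it below -/
import Mathlib

section
/- For every hypothesis class H with Ldim(H) = d < ∞, the Standard Optimal Learner SOL_H, defined by SOL_H(S,x) = 1 if Ldim(H_S^{(x,1)}) ≥ Ldim(H_S^{(x,0)}) and 0 otherwise, makes at most d mistakes on any H-realizable sample. -/
open Classical

variable {X : Type*}

/-- A hypothesis `h` is consistent with a sample `S`. -/
def Consistent (h : X → Bool) (S : List (X × Bool)) : Prop :=
  ∀ p ∈ S, h p.1 = p.2

/-- A sample is realizable by the class `H`. -/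
def Realizable (H : Set (X → Bool)) (S : List (X × Bool)) : Prop :=
  ∃ h ∈ H, Consistent h S

/-- The version space `H_S`. -/
def VS (H : Set (X → Bool)) (S : List (X × Bool)) : Set (X → Bool) :=
  {h ∈ H | Consistent h S}

/-- `H^{(x,r)}`. -/
def Restrict (H : Set (X → Bool)) (x : X) (r : Bool) : Set (X → Bool) :=
  {h ∈ H | h x = r}

/-- `Shatters H d` holds iff there is a complete binary tree of depth `d` shattered by `H`,
equivalently stated recursively. -/
def Shatters (H : Set (X → Bool)) : ℕ → Prop
  | 0 => H.Nonempty
  | d + 1 => ∃ x : X, Shatters (Restrict H x false) d ∧ Shatters (Restrict H x true) d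

/-- Littlestone dimension, with `Ldim ∅ = ⊥` (playing the role of `-1`). -/
noncomputable def Ldim (H : Set (X → Bool)) : WithBot ℕ∞ :=
  ⨆ d ∈ {d : ℕ | Shatters H d}, ((d : ℕ∞) : WithBot ℕ∞)

def MistakesFrom (A : List (X × Bool) → X → Bool) :
    List (X × Bool) → List (X × Bool) → ℕ
  | _, [] => 0
  | pre, p :: rest =>
      (if A pre p.1 ≠ p.2 then 1 else 0) + MistakesFrom A (pre ++ [p]) rest

/-- Number of mistakes that the online learner `A` makes on the sample `S`. -/
def Mistakes (A : List (X × Bool) → X → Bool) (S : List (X × Bool)) : ℕ :=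
  MistakesFrom A [] S

/-- Mistake bound of `A` with respect to `H`. -/
noncomputable def MB (A : List (X × Bool) → X → Bool) (H : Set (X → Bool)) : ℕ∞ :=
  ⨆ S ∈ {S | Realizable H S}, (Mistakes A S : ℕ∞)

/-- `A` is an optimal online learner for `H`. -/
def IsOptimal (A : List (X × Bool) → X → Bool) (H : Set (X → Bool)) : Prop :=
  MB A H = ⨅ B : List (X × Bool) → X → Bool, MB B H

/-- Post-`S` mistake bound of `A` w.r.t. `H`. -/
noncomputable def PostMB (A : List (X × Bool) → X → Bool) (H : Set (X → Bool))
    (S : List (X × Bool)) : ℕ∞ :=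
  ⨆ S' ∈ {S' | Realizable H (S ++ S')}, ((Mistakes A (S ++ S') - Mistakes A S : ℕ) : ℕ∞)

/-- Optimal post-`S` mistake bound. -/
noncomputable def OptPostMB (H : Set (X → Bool)) (S : List (X × Bool)) : ℕ∞ :=
  ⨅ A : List (X × Bool) → X → Bool, PostMB A H S

/-- `A` is anytime optimal for `H`. -/
def AnytimeOptimal (A : List (X × Bool) → X → Bool) (H : Set (X → Bool)) : Prop :=
  ∀ S, Realizable H S → PostMB A H S = OptPostMB H S

/-- The Standard Optimal Learner for `H`. -/
noncomputable def SOL (H : Set (X → Bool)) : List (X × Bool) → X → Bool :=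
  fun S x =>
    if Ldim (Restrict (VS H S) x false) ≤ Ldim (Restrict (VS H S) x true) then true
    else false

/-!
When the Standard Optimal Learner errs on `(x, y)`, the side `H_S^{(x,y)}` that the true label
selects has Littlestone dimension at most that of the other side. So any depth `k` shattered by the
updated version space is also shattered by the other side, and the old version space shatters
depth `k + 1` with `x` at the root. Each mistake therefore lowers the largest shattered depth of
the version space by at least one, while realizability keeps the version space nonempty, i.e.
shattering depth `0`; starting from depth `d`, at most `d` mistakes can occur.
-/

section

variable {H H₁ H₂ : Set (X → Bool)}

lemma restrict_subset (H : Set (X → Bool)) (x : X) (r : Bool) : Restrict H x r ⊆ H :=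
  fun _ hh => hh.1

lemma Shatters.mono (hs : H₁ ⊆ H₂) {d : ℕ} (h : Shatters H₁ d) : Shatters H₂ d := by
  induction d generalizing H₁ H₂ with
  | zero => exact h.mono hs
  | succ m ih =>
    obtain ⟨x, h0, h1⟩ := h
    exact ⟨x, ih (fun g hg => ⟨hs hg.1, hg.2⟩) h0, ih (fun g hg => ⟨hs hg.1, hg.2⟩) h1⟩

lemma Shatters.of_le {j d : ℕ} (hs : Shatters H d) (h : j ≤ d) : Shatters H j := by
  induction h with
  | refl => exact hs
  | step _ ih =>
    obtain ⟨x, h0, _⟩ := hs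
    exact ih (h0.mono (restrict_subset _ _ _))

lemma le_Ldim_of_shatters {k : ℕ} (h : Shatters H k) : ((k : ℕ∞) : WithBot ℕ∞) ≤ Ldim H :=
  le_iSup₂ (f := fun (d : ℕ) (_ : d ∈ {d : ℕ | Shatters H d}) => ((d : ℕ∞) : WithBot ℕ∞)) k h

lemma Ldim_le_iff {c : WithBot ℕ∞} :
    Ldim H ≤ c ↔ ∀ k : ℕ, Shatters H k → ((k : ℕ∞) : WithBot ℕ∞) ≤ c :=
  iSup₂_le_iff

lemma coe_le_Ldim_iff {k : ℕ} : ((k : ℕ∞) : WithBot ℕ∞) ≤ Ldim H ↔ Shatters H k := by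
  refine ⟨fun h => ?_, le_Ldim_of_shatters⟩
  by_contra hk
  have hlt : ∀ j, Shatters H j → j < k := fun j hj => lt_of_not_ge fun hkj => hk (hj.of_le hkj)
  cases k with
  | zero =>
    have hbot : Ldim H ≤ ⊥ := Ldim_le_iff.2 fun j hj => absurd (hlt j hj) (Nat.not_lt_zero j)
    exact absurd (h.trans hbot) (WithBot.bot_lt_coe _).not_ge
  | succ m =>
    have hm : Ldim H ≤ ((m : ℕ∞) : WithBot ℕ∞) :=
      Ldim_le_iff.2 fun j hj => by exact_mod_cast Nat.lt_succ_iff.1 (hlt j hj)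
    exact absurd (h.trans hm) (by exact_mod_cast (Nat.lt_succ_self m).not_ge)

end

lemma VS_nil (H : Set (X → Bool)) : VS H [] = H := by
  simp [VS, Consistent]

lemma VS_append_singleton (H : Set (X → Bool)) (pre : List (X × Bool)) (p : X × Bool) :
    VS H (pre ++ [p]) = Restrict (VS H pre) p.1 p.2 := by
  ext h
  simp only [VS, Restrict, Consistent, List.mem_append, List.mem_singleton, Set.mem_ofPred_eq]
  constructor
  · rintro ⟨hH, hc⟩
    exact ⟨⟨hH, fun q hq => hc q (Or.inl hq)⟩, hc p (Or.inr rfl)⟩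
  · rintro ⟨⟨hH, hc⟩, hp⟩
    refine ⟨hH, fun q hq => ?_⟩
    rcases hq with hq | rfl
    · exact hc q hq
    · exact hp

lemma Realizable.VS_nonempty {H : Set (X → Bool)} {pre S : List (X × Bool)}
    (h : Realizable H (pre ++ S)) : (VS H pre).Nonempty := by
  obtain ⟨g, hg, hcons⟩ := h
  exact ⟨g, hg, fun q hq => hcons q (List.mem_append_left S hq)⟩

section

variable {H : Set (X → Bool)} {S : List (X × Bool)} {x : X} {y : Bool}

lemma Ldim_restrict_le_of_SOL_ne (hmiss : SOL H S x ≠ y) :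
    Ldim (Restrict (VS H S) x y) ≤ Ldim (Restrict (VS H S) x (!y)) := by
  cases y <;> by_cases hle : Ldim (Restrict (VS H S) x false) ≤ Ldim (Restrict (VS H S) x true)
    <;> simp_all [SOL, le_of_not_ge]

lemma shatters_succ_of_SOL_ne (hmiss : SOL H S x ≠ y) {k : ℕ}
    (hk : Shatters (Restrict (VS H S) x y) k) : Shatters (VS H S) (k + 1) := by
  have hother : Shatters (Restrict (VS H S) x (!y)) k :=
    coe_le_Ldim_iff.1 ((le_Ldim_of_shatters hk).trans (Ldim_restrict_le_of_SOL_ne hmiss))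
  cases y
  · exact ⟨x, hk, hother⟩
  · exact ⟨x, hother, hk⟩

end

theorem mistakesFrom_SOL_le (H : Set (X → Bool)) (S : List (X × Bool)) :
    ∀ (pre : List (X × Bool)) (d : ℕ), Realizable H (pre ++ S) →
      (∀ k, Shatters (VS H pre) k → k ≤ d) → MistakesFrom (SOL H) pre S ≤ d := by
  induction S with
  | nil => intro pre d _ _; simp [MistakesFrom]
  | cons p rest ih =>
    intro pre d hreal hld
    have hreal' : Realizable H ((pre ++ [p]) ++ rest) := by simpa using hreal
    rw [MistakesFrom]
    by_cases hmiss : SOL H pre p.1 ≠ p.2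
    · have hdrop : ∀ k, Shatters (VS H (pre ++ [p])) k → k + 1 ≤ d := fun k hk =>
        hld _ (shatters_succ_of_SOL_ne hmiss (VS_append_singleton H pre p ▸ hk))
      have hd : 1 ≤ d := hdrop 0 hreal'.VS_nonempty
      have hrest := ih (pre ++ [p]) (d - 1) hreal' fun k hk => Nat.le_sub_one_of_lt (hdrop k hk)
      rw [if_pos hmiss]
      omega
    · have hrest := ih (pre ++ [p]) d hreal' fun k hk =>
        hld k (hk.mono (VS_append_singleton H pre p ▸ restrict_subset _ _ _))
      rw [if_neg hmiss]
      omega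

/-- if `Ldim H = d < ∞`, the Standard Optimal Learner makes at most `d`
mistakes on any `H`-realizable sample. -/
theorem stmt2 {X : Type*} (H : Set (X → Bool)) (d : ℕ)
    (hd : Ldim H = ((d : ℕ∞) : WithBot ℕ∞)) :
    ∀ S : List (X × Bool), Realizable H S → Mistakes (SOL H) S ≤ d := by
  intro S hS
  have hshatter : ∀ k, Shatters (VS H []) k → k ≤ d := fun k hk => by
    have hle := le_Ldim_of_shatters hk
    rw [VS_nil, hd] at hle
    exact_mod_cast hle
  exact mistakesFrom_SOL_le H S [] d hS hshatter
end

section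
/- For every hypothesis class H and every online learner A, if Ldim(H) ≥ d for some natural number d, then there exists an H-realizable sample of length d on which A makes d mistakes. Consequently M_A(H) ≥ Ldim(H) for every online learner A. -/
open Classical

variable {X : Type*}

theorem Consistent.cons {h : X → Bool} {x : X} {b : Bool} {S : List (X × Bool)}
    (hx : h x = b) (hS : Consistent h S) : Consistent h ((x, b) :: S) := by
  rintro p (_ | ⟨_, hp⟩)
  exacts [hx, hS p hp]

theorem Realizable.cons_of_restrict {H : Set (X → Bool)} {x : X} {b : Bool}
    {S : List (X × Bool)} (hS : Realizable (Restrict H x b) S) :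
    Realizable H ((x, b) :: S) :=
  let ⟨h, ⟨hH, hx⟩, hS⟩ := hS
  ⟨h, hH, hS.cons hx⟩

theorem mistakesFrom_cons_not (A : List (X × Bool) → X → Bool) (pre S : List (X × Bool))
    (x : X) :
    MistakesFrom A pre ((x, !A pre x) :: S) = MistakesFrom A (pre ++ [(x, !A pre x)]) S + 1 := by
  simp [MistakesFrom, Nat.add_comm]

/-- The adversary labels each point by the negation of the learner's prediction, and keeps
descending into the half of the shattered tree selected by that label. -/
theorem exists_realizable_mistakesFrom_eq_of_shatters (A : List (X × Bool) → X → Bool) :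
    ∀ (d : ℕ) (H : Set (X → Bool)) (pre : List (X × Bool)), Shatters H d →
      ∃ S, Realizable H S ∧ S.length = d ∧ MistakesFrom A pre S = d
  | 0, _, _, hH => ⟨[], ⟨hH.some, hH.some_mem, by simp [Consistent]⟩, rfl, rfl⟩
  | d + 1, H, pre, ⟨x, hfalse, htrue⟩ => by
    set b := !A pre x
    have hb : Shatters (Restrict H x b) d := by cases b <;> assumption
    obtain ⟨S, hS, hlen, hmis⟩ :=
      exists_realizable_mistakesFrom_eq_of_shatters A d _ (pre ++ [(x, b)]) hb
    exact ⟨(x, b) :: S, hS.cons_of_restrict, by simp [hlen],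
      by rw [mistakesFrom_cons_not, hmis]⟩

theorem Realizable.mistakes_le_MB {H : Set (X → Bool)} {S : List (X × Bool)}
    (hS : Realizable H S) (A : List (X × Bool) → X → Bool) : (Mistakes A S : ℕ∞) ≤ MB A H :=
  le_iSup₂ (f := fun S (_ : S ∈ {S | Realizable H S}) => (Mistakes A S : ℕ∞)) S hS

theorem Ldim_le_of_forall_shatters {H : Set (X → Bool)} {m : ℕ∞}
    (h : ∀ d : ℕ, Shatters H d → (d : ℕ∞) ≤ m) : Ldim H ≤ (m : WithBot ℕ∞) :=
  iSup₂_le fun d hd => WithBot.coe_le_coe.2 (h d hd)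

/-- for every online learner `A`, if `Ldim H ≥ d` then there is an
`H`-realizable sample of length `d` on which `A` makes `d` mistakes; consequently
`M_A(H) ≥ Ldim H`. -/
theorem stmt3 {X : Type*} (H : Set (X → Bool)) (A : List (X × Bool) → X → Bool) :
    (∀ d : ℕ, Shatters H d →
      ∃ S : List (X × Bool), Realizable H S ∧ S.length = d ∧ Mistakes A S = d) ∧
    Ldim H ≤ ((MB A H : ℕ∞) : WithBot ℕ∞) := by
  have adversary : ∀ d : ℕ, Shatters H d →
      ∃ S : List (X × Bool), Realizable H S ∧ S.length = d ∧ Mistakes A S = d :=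
    fun d hd => exists_realizable_mistakesFrom_eq_of_shatters A d H [] hd
  refine ⟨adversary, Ldim_le_of_forall_shatters fun d hd => ?_⟩
  obtain ⟨S, hS, -, hmis⟩ := adversary d hd
  exact hmis ▸ hS.mistakes_le_MB A
end

section
/- Define the class H = ∪_{e∈ℕ} {χ_{{3e}}} ∪ ∪_{e : φ_e(e)↓} {χ_{{3e,3e+1}}, χ_{{3e,3e+1,3e+2}}} over domain ℕ. Then every anytime optimal online learner A for H satisfies: for every e, on the sample S^e = ((3e,1)) and query point 3e+1, A predicts 1 if φ_e(e)↓ and 0 otherwise. Consequently no anytime optimal online learner for H is computable. -/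
open Classical

variable {X : Type*}

/-- The `e`-th partial computable function in the standard numbering by codes. -/
def phi (e : ℕ) : ℕ →. ℕ :=
  (Denumerable.ofNat Nat.Partrec.Code e).eval

/-- `φ_e(x)↓`. -/
def phiHalts (e x : ℕ) : Prop := (phi e x).Dom

/-- The {0,1}-valued learner induced by a two-place partial computable function:
it predicts `true` exactly when the output converges to `1`. -/
noncomputable def predOf (A : ℕ → ℕ →. ℕ) : List (ℕ × Bool) → ℕ → Bool :=
  fun S x => if 1 ∈ A (Encodable.encode S) x then true else false

/-- `A` is a computable online learner for `H`: a two-place partial computable function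
converging with value in {0,1} on every (encoded `H`-realizable sample, point) pair. -/
def IsCOnlineLearner (A : ℕ → ℕ →. ℕ) (H : Set (ℕ → Bool)) : Prop :=
  Partrec₂ A ∧
    ∀ S : List (ℕ × Bool), Realizable H S → ∀ x : ℕ,
      ∃ y ∈ A (Encodable.encode S) x, y = 0 ∨ y = 1

/-- The class `H^RER_halt = ∪_e {χ_{3e}} ∪ ∪_{e : φ_e(e)↓} {χ_{3e,3e+1}, χ_{3e,3e+1,3e+2}}`. -/
def HhaltRER : Set (ℕ → Bool) :=
  {f | ∃ e : ℕ, f = fun n => decide (n = 3 * e)} ∪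
  {f | ∃ e : ℕ, phiHalts e e ∧
    (f = (fun n => decide (n = 3 * e ∨ n = 3 * e + 1)) ∨
     f = (fun n => decide (n = 3 * e ∨ n = 3 * e + 1 ∨ n = 3 * e + 2)))}

/-!
After the sample `((3e, 1))` the consistent hypotheses are `χ_{3e}` alone if `φ_e(e)` diverges,
and `χ_{3e}`, `χ_{3e,3e+1}`, `χ_{3e,3e+1,3e+2}` if it halts. In the first case the learner
predicting `χ_{3e}` makes no further mistake, so an anytime optimal learner must predict `0` at
`3e+1`. In the second case the learner predicting `χ_{3e,3e+1}` until it is contradicted makes at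
most one further mistake, while a learner predicting `0` at `3e+1` is wrong there and can then be
made wrong at `3e+2` as well; so an anytime optimal learner must predict `1`. Thus its prediction
at `3e+1` decides the diagonal halting problem, which is not computable.
-/

section MistakeBounds

@[simp]
theorem consistent_append {h : X → Bool} {S S' : List (X × Bool)} :
    Consistent h (S ++ S') ↔ Consistent h S ∧ Consistent h S' := by
  simp only [Consistent, List.mem_append, or_imp, forall_and]

theorem mistakesFrom_append (A : List (X × Bool) → X → Bool) (pre S S' : List (X × Bool)) :
    MistakesFrom A pre (S ++ S') = MistakesFrom A pre S + MistakesFrom A (pre ++ S) S' := by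
  induction S generalizing pre with
  | nil => simp [MistakesFrom]
  | cons p S ih =>
    simp only [List.cons_append, MistakesFrom, ih, List.append_assoc, List.nil_append,
      Nat.add_assoc]

theorem mistakes_append_sub_mistakes (A : List (X × Bool) → X → Bool) (S S' : List (X × Bool)) :
    Mistakes A (S ++ S') - Mistakes A S = MistakesFrom A S S' := by
  simp [Mistakes, mistakesFrom_append]

theorem le_postMB {A : List (X × Bool) → X → Bool} {H : Set (X → Bool)} {S S' : List (X × Bool)}
    (h : Realizable H (S ++ S')) : (MistakesFrom A S S' : ℕ∞) ≤ PostMB A H S := by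
  rw [← mistakes_append_sub_mistakes]
  exact le_iSup₂ (f := fun S' (_ : Realizable H (S ++ S')) =>
    ((Mistakes A (S ++ S') - Mistakes A S : ℕ) : ℕ∞)) S' h

theorem postMB_le {A : List (X × Bool) → X → Bool} {H : Set (X → Bool)} {S : List (X × Bool)}
    {k : ℕ} (h : ∀ S', Realizable H (S ++ S') → MistakesFrom A S S' ≤ k) :
    PostMB A H S ≤ k := by
  refine iSup₂_le fun S' hS' => ?_
  rw [mistakes_append_sub_mistakes]
  exact_mod_cast h S' hS'

theorem AnytimeOptimal.postMB_le_postMB {A : List (X × Bool) → X → Bool} {H : Set (X → Bool)}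
    (hA : AnytimeOptimal A H) {S : List (X × Bool)} (hS : Realizable H S)
    (B : List (X × Bool) → X → Bool) : PostMB A H S ≤ PostMB B H S :=
  (hA S hS).trans_le (iInf_le _ B)

theorem mistakesFrom_le_of_potential {A : List (X × Bool) → X → Bool} {h : X → Bool}
    (Φ : List (X × Bool) → ℕ)
    (hΦ : ∀ pre x, Consistent h pre →
      Φ (pre ++ [(x, h x)]) + (if A pre x ≠ h x then 1 else 0) ≤ Φ pre) :
    ∀ {S pre : List (X × Bool)}, Consistent h (pre ++ S) → MistakesFrom A pre S ≤ Φ pre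
  | [], _, _ => Nat.zero_le _
  | (x, b) :: S, pre, hc => by
    have hpre : Consistent h pre := (consistent_append.1 hc).1
    obtain rfl : h x = b := hc (x, b) (by simp)
    have hrest := mistakesFrom_le_of_potential Φ hΦ (S := S) (pre := pre ++ [(x, h x)])
      (by simpa using hc)
    have := hΦ pre x hpre
    simp only [MistakesFrom]
    omega

theorem mistakesFrom_const_eq_zero {h : X → Bool} {pre S : List (X × Bool)}
    (hc : Consistent h (pre ++ S)) : MistakesFrom (fun _ => h) pre S = 0 :=
  Nat.le_zero.1 <| mistakesFrom_le_of_potential (fun _ => 0) (fun _ _ _ => by simp) hc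

end MistakeBounds

section HhaltRER

abbrev chi1 (e : ℕ) : ℕ → Bool := fun n => decide (n = 3 * e)

abbrev chi2 (e : ℕ) : ℕ → Bool := fun n => decide (n = 3 * e ∨ n = 3 * e + 1)

abbrev chi3 (e : ℕ) : ℕ → Bool := fun n => decide (n = 3 * e ∨ n = 3 * e + 1 ∨ n = 3 * e + 2)

variable {e : ℕ}

theorem chi1_mem_HhaltRER : chi1 e ∈ HhaltRER := Or.inl ⟨e, rfl⟩

theorem chi2_mem_HhaltRER (he : phiHalts e e) : chi2 e ∈ HhaltRER := Or.inr ⟨e, he, Or.inl rfl⟩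

theorem chi3_mem_HhaltRER (he : phiHalts e e) : chi3 e ∈ HhaltRER := Or.inr ⟨e, he, Or.inr rfl⟩

theorem eq_chi_of_mem_HhaltRER {f : ℕ → Bool} (hf : f ∈ HhaltRER) (hfe : f (3 * e) = true) :
    f = chi1 e ∨ phiHalts e e ∧ (f = chi2 e ∨ f = chi3 e) := by
  rcases hf with ⟨e', rfl⟩ | ⟨e', he', rfl | rfl⟩ <;>
    obtain rfl : e' = e := by simp at hfe; omega
  exacts [Or.inl rfl, Or.inr ⟨he', Or.inl rfl⟩, Or.inr ⟨he', Or.inr rfl⟩]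

theorem realizable_sample : Realizable HhaltRER [(3 * e, true)] :=
  ⟨chi1 e, chi1_mem_HhaltRER, by simp [Consistent]⟩

theorem postMB_chi1_eq_zero (he : ¬ phiHalts e e) :
    PostMB (fun _ => chi1 e) HhaltRER [(3 * e, true)] = 0 := by
  refine nonpos_iff_eq_zero.1 (postMB_le (k := 0) fun S' ⟨f, hf, hc⟩ => ?_)
  have hfe : f (3 * e) = true := hc (3 * e, true) (by simp)
  obtain rfl : f = chi1 e := by simpa [he] using eq_chi_of_mem_HhaltRER hf hfe
  exact (mistakesFrom_const_eq_zero hc).le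

def optimisticLearner (e : ℕ) (pre : List (ℕ × Bool)) : ℕ → Bool :=
  if (3 * e + 1, false) ∈ pre then chi1 e
  else if (3 * e + 2, true) ∈ pre then chi3 e
  else chi2 e

theorem optimisticLearner_eq_of_refuted {h : ℕ → Bool}
    (hh : h = chi1 e ∨ h = chi2 e ∨ h = chi3 e) {pre : List (ℕ × Bool)} (hpre : Consistent h pre)
    (hm : (3 * e + 1, false) ∈ pre ∨ (3 * e + 2, true) ∈ pre) : optimisticLearner e pre = h := by
  have h1 : (3 * e + 1, false) ∈ pre → h (3 * e + 1) = false := fun hm => hpre _ hm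
  have h2 : (3 * e + 2, true) ∈ pre → h (3 * e + 2) = true := fun hm => hpre _ hm
  rcases hh with rfl | rfl | rfl <;> simp_all [optimisticLearner]

theorem refuting_example_of_chi2_ne {h : ℕ → Bool} (hh : h = chi1 e ∨ h = chi2 e ∨ h = chi3 e)
    {x : ℕ} (hx : chi2 e x ≠ h x) :
    (x, h x) = (3 * e + 1, false) ∨ (x, h x) = (3 * e + 2, true) := by
  rcases hh with rfl | rfl | rfl
  · obtain rfl : x = 3 * e + 1 := by by_contra hx'; simp [hx'] at hx
    simp
  · exact absurd rfl hx
  · obtain rfl : x = 3 * e + 2 := by by_contra hx'; simp [hx'] at hx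
    simp

theorem mistakesFrom_optimisticLearner_le_one {h : ℕ → Bool}
    (hh : h = chi1 e ∨ h = chi2 e ∨ h = chi3 e) {pre S : List (ℕ × Bool)}
    (hc : Consistent h (pre ++ S)) : MistakesFrom (optimisticLearner e) pre S ≤ 1 := by
  refine (mistakesFrom_le_of_potential
    (fun pre => if (3 * e + 1, false) ∈ pre ∨ (3 * e + 2, true) ∈ pre then 0 else 1)
    (fun pre x hpre => ?_) hc).trans (by split_ifs <;> simp)
  by_cases hm : (3 * e + 1, false) ∈ pre ∨ (3 * e + 2, true) ∈ pre
  · have hm' := hm.imp (List.mem_append_left [(x, h x)]) (List.mem_append_left [(x, h x)])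
    rw [if_pos hm', if_pos hm, optimisticLearner_eq_of_refuted hh hpre hm]
    simp
  · have hpred : optimisticLearner e pre = chi2 e := by
      simp_all [optimisticLearner]
    rw [if_neg hm, hpred]
    by_cases hx : chi2 e x = h x
    · rw [if_neg (not_not_intro hx)]
      split_ifs <;> simp
    · have hm' :
          (3 * e + 1, false) ∈ pre ++ [(x, h x)] ∨ (3 * e + 2, true) ∈ pre ++ [(x, h x)] := by
        rcases refuting_example_of_chi2_ne hh hx with h' | h' <;> simp [h']
      rw [if_pos hm', if_pos hx]

theorem postMB_optimisticLearner_le_one :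
    PostMB (optimisticLearner e) HhaltRER [(3 * e, true)] ≤ 1 := by
  refine postMB_le (k := 1) fun S' ⟨f, hf, hc⟩ => ?_
  have hfe : f (3 * e) = true := hc (3 * e, true) (by simp)
  refine mistakesFrom_optimisticLearner_le_one ?_ hc
  rcases eq_chi_of_mem_HhaltRER hf hfe with hf | ⟨-, hf⟩ <;> tauto

theorem one_le_postMB_of_apply_eq_true {A : List (ℕ × Bool) → ℕ → Bool}
    (hA : A [(3 * e, true)] (3 * e + 1) = true) : 1 ≤ PostMB A HhaltRER [(3 * e, true)] := by
  have hreal : Realizable HhaltRER ([(3 * e, true)] ++ [(3 * e + 1, false)]) :=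
    ⟨chi1 e, chi1_mem_HhaltRER, by simp [Consistent]⟩
  simpa [MistakesFrom, hA] using le_postMB (A := A) hreal

theorem two_le_postMB_of_apply_eq_false (he : phiHalts e e) {A : List (ℕ × Bool) → ℕ → Bool}
    (hA : A [(3 * e, true)] (3 * e + 1) = false) : 2 ≤ PostMB A HhaltRER [(3 * e, true)] := by
  set b := A ([(3 * e, true)] ++ [(3 * e + 1, true)]) (3 * e + 2)
  have hreal : Realizable HhaltRER ([(3 * e, true)] ++ [(3 * e + 1, true), (3 * e + 2, !b)]) := by
    cases b
    · exact ⟨chi3 e, chi3_mem_HhaltRER he, by simp [Consistent]⟩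
    · exact ⟨chi2 e, chi2_mem_HhaltRER he, by simp [Consistent]⟩
  simpa [MistakesFrom, hA, b] using le_postMB (A := A) hreal

theorem AnytimeOptimal.apply_eq_true_iff_phiHalts {A : List (ℕ × Bool) → ℕ → Bool}
    (hA : AnytimeOptimal A HhaltRER) (e : ℕ) :
    A [(3 * e, true)] (3 * e + 1) = true ↔ phiHalts e e := by
  have hle := hA.postMB_le_postMB (realizable_sample (e := e))
  constructor
  · intro hpred
    by_contra he
    have := (one_le_postMB_of_apply_eq_true hpred).trans
      ((hle _).trans (postMB_chi1_eq_zero he).le)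
    simp at this
  · intro he
    by_contra hpred
    have := (two_le_postMB_of_apply_eq_false he (Bool.eq_false_iff.2 hpred)).trans
      ((hle _).trans postMB_optimisticLearner_le_one)
    norm_num at this

end HhaltRER

section Computability

open Nat.Partrec Code

theorem eval_comp_const (c : Code) (m n : ℕ) : eval (comp c (Code.const m)) n = eval c m := by
  simp only [eval, eval_const]
  exact Part.bind_some m (eval c)

theorem not_computablePred_phiHalts_self : ¬ ComputablePred fun e => phiHalts e e := by
  intro hK
  obtain ⟨f, hf, hfK⟩ := ComputablePred.computable_iff.1 hK
  refine ComputablePred.halting_problem 0 (ComputablePred.computable_iff.2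
    ⟨fun c => f (Encodable.encode (comp c (Code.const 0))), ?_, funext fun c => ?_⟩)
  · exact hf.comp (Computable.encode.comp
      (primrec₂_comp.comp Primrec.id (Primrec.const (Code.const 0))).to_comp)
  · simp [← congrFun hfK, phiHalts, phi, eval_comp_const]

theorem IsCOnlineLearner.computable_predOf {A : ℕ → ℕ →. ℕ} {H : Set (ℕ → Bool)}
    (hA : IsCOnlineLearner A H) {α : Type*} [Primcodable α] {S : α → List (ℕ × Bool)}
    {x : α → ℕ} (hS : Computable S) (hx : Computable x) (hreal : ∀ a, Realizable H (S a)) :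
    Computable fun a => predOf A (S a) (x a) := by
  have hval : ∀ a, (predOf A (S a) (x a)).toNat ∈ A (Encodable.encode (S a)) (x a) := by
    intro a
    obtain ⟨y, hy, rfl | rfl⟩ := hA.2 (S a) (hreal a) (x a)
    · have h1 : 1 ∉ A (Encodable.encode (S a)) (x a) := fun h1 => by
        cases Part.mem_unique hy h1
      simpa [predOf, h1] using hy
    · simp [predOf, hy]
  rw [← Computable.encode_iff]
  refine ((hA.1.comp (Computable.encode.comp hS) hx).of_eq_tot hval).of_eq fun a => ?_
  cases predOf A (S a) (x a) <;> rfl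

end Computability

/-- every anytime optimal learner for `H^RER_halt` predicts, on the sample
`((3e,1))` and query `3e+1`, the value `1` iff `φ_e(e)↓`; consequently no anytime
optimal online learner for this class is computable. -/
theorem stmt7 :
    (∀ A : List (ℕ × Bool) → ℕ → Bool, AnytimeOptimal A HhaltRER →
      ∀ e : ℕ, (A [(3 * e, true)] (3 * e + 1) = true ↔ phiHalts e e)) ∧
    ¬ ∃ A : ℕ → ℕ →. ℕ,
        IsCOnlineLearner A HhaltRER ∧ AnytimeOptimal (predOf A) HhaltRER := by
  refine ⟨fun A hA => hA.apply_eq_true_iff_phiHalts, ?_⟩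
  rintro ⟨A, hA, hopt⟩
  have hsample : Computable fun e : ℕ => [(3 * e, true)] :=
    (Primrec.list_cons.comp ((Primrec.nat_mul.comp (Primrec.const 3) Primrec.id).pair
      (Primrec.const true)) (Primrec.const [])).to_comp
  have hquery : Computable fun e : ℕ => 3 * e + 1 :=
    (Primrec.nat_add.comp (Primrec.nat_mul.comp (Primrec.const 3) Primrec.id)
      (Primrec.const 1)).to_comp
  exact not_computablePred_phiHalts_self <| ComputablePred.computable_iff.2
    ⟨_, hA.computable_predOf hsample hquery fun _ => realizable_sample,
      funext fun e => propext (hopt.apply_eq_true_iff_phiHalts e).symm⟩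
end

section
/- If a class H ⊆ {0,1}^ℕ contains 2^n thresholds — i.e., there exist x_1,...,x_{2^n} ∈ ℕ and h_1,...,h_{2^n} ∈ H with h_i(x_j) = 1 iff i ≥ j — then Ldim(H) ≥ n. -/
open Classical

variable {X : Type*}

/-!
Binary search on the thresholds: the point `x m` at the median index `m = 2^n` of a family of
`2^(n+1)` thresholds is labelled `false` by the lower half of the hypotheses and `true` by the
upper half, and each half is again a family of `2^n` thresholds.
-/

def IsThresholds {ι : Type*} [LE ι] (x : ι → X) (h : ι → X → Bool) : Prop :=
  ∀ i j, h i (x j) = true ↔ j ≤ i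

lemma IsThresholds.comp_strictMono {ι κ : Type*} [Preorder ι] [LinearOrder κ]
    {x : ι → X} {h : ι → X → Bool} (hthr : IsThresholds x h) {e : κ → ι} (he : StrictMono e) :
    IsThresholds (x ∘ e) (h ∘ e) :=
  fun i j => (hthr (e i) (e j)).trans he.le_iff_le

lemma shatters_of_isThresholds (n : ℕ) :
    ∀ {H : Set (X → Bool)} (x : Fin (2 ^ n) → X) (h : Fin (2 ^ n) → X → Bool),
      IsThresholds x h → Set.range h ⊆ H → Shatters H n := by
  induction n with
  | zero => exact fun _ h _ hH => ⟨h 0, hH ⟨0, rfl⟩⟩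
  | succ n ih =>
    rw [Nat.two_pow_succ]
    intro H x h hthr hH
    set m : Fin (2 ^ n + 2 ^ n) := Fin.natAdd (2 ^ n) ⟨0, Nat.two_pow_pos n⟩
    refine ⟨x m, ih _ _ (hthr.comp_strictMono (Fin.strictMono_castAdd _)) ?_,
      ih _ _ (hthr.comp_strictMono (Fin.strictMono_natAdd _)) ?_⟩
    · rintro _ ⟨i, rfl⟩
      refine ⟨hH ⟨_, rfl⟩, Bool.eq_false_iff.2 fun hi => ((hthr _ _).1 hi).not_gt ?_⟩
      exact Fin.lt_def.2 (by simp [m])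
    · rintro _ ⟨i, rfl⟩
      exact ⟨hH ⟨_, rfl⟩, (hthr _ _).2 (Fin.le_def.2 (by simp [m]))⟩

lemma le_ldim_of_shatters {H : Set (X → Bool)} {d : ℕ} (hd : Shatters H d) :
    ((d : ℕ∞) : WithBot ℕ∞) ≤ Ldim H :=
  le_iSup₂ (f := fun (d : ℕ) (_ : d ∈ {d : ℕ | Shatters H d}) => ((d : ℕ∞) : WithBot ℕ∞)) d hd

/-- a class containing `2^n` thresholds has Littlestone dimension at
least `n`. -/
theorem stmt14 (H : Set (ℕ → Bool)) (n : ℕ)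
    (x : Fin (2 ^ n) → ℕ) (h : Fin (2 ^ n) → ℕ → Bool)
    (hmem : ∀ i, h i ∈ H)
    (hthr : ∀ i j, h i (x j) = true ↔ j ≤ i) :
    ((n : ℕ∞) : WithBot ℕ∞) ≤ Ldim H :=
  le_ldim_of_shatters (shatters_of_isThresholds n x h hthr (Set.range_subset_iff.2 hmem))
end
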